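/- arXiv:1809.04935 — 5 statements merged into one kernel-verified Lean document; each statement's English description precedes it below -/
import Mathlib

section
/- A ring R is s-unital (i.e., x ∈ xR ∩ Rx for each x in R) if and only if for every positive integer n and elements s_1, ..., s_n in R there exists f in R such that f·s_i = s_i·f = s_i for all 1 ≤ i ≤ n. -/
/-!
With `e ∘ f := e + f - f * e` (formally `1 - (1 - f) * (1 - e)`), one has
`(e ∘ f) * x - x = f * (x - e * x) - (x - e * x)`. So if `e` is a left unit for a finite set and
`f` a left unit for the defect `a - e * a`, then `e ∘ f` is a left unit for the set with `a` added;
right units are obtained in the opposite ring. Finally, if `e` is a left and `f` a right unit for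
`x`, then `e ∘ f` is a two-sided unit for `x`.
-/

section

variable {R : Type*} [NonUnitalRing R]

lemma add_sub_mul_mul_eq_self_iff (e f x : R) :
    (e + f - f * e) * x = x ↔ f * (x - e * x) = x - e * x := by
  rw [← sub_eq_zero, ← sub_eq_zero (a := f * _)]
  constructor <;> intro h <;> rw [← h] <;> noncomm_ring

lemma exists_mul_left_eq_self_of_finite (h : ∀ x : R, ∃ y : R, x = y * x) {s : Set R}
    (hs : s.Finite) : ∃ e : R, ∀ x ∈ s, e * x = x := by
  induction s, hs using Set.Finite.induction_on with
  | empty => exact ⟨0, by simp⟩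
  | @insert a s _ _ ih =>
    obtain ⟨e, he⟩ := ih
    obtain ⟨f, hf⟩ := h (a - e * a)
    refine ⟨e + f - f * e, Set.forall_mem_insert.mpr ⟨?_, fun x hx => ?_⟩⟩
    · exact (add_sub_mul_mul_eq_self_iff e f a).mpr hf.symm
    · exact (add_sub_mul_mul_eq_self_iff e f x).mpr (by simp [he x hx])

lemma exists_mul_right_eq_self_of_finite (h : ∀ x : R, ∃ y : R, x = x * y) {s : Set R}
    (hs : s.Finite) : ∃ e : R, ∀ x ∈ s, x * e = x := by
  have hop (x : Rᵐᵒᵖ) : ∃ y, x = y * x := by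
    obtain ⟨y, hy⟩ := h x.unop
    exact ⟨MulOpposite.op y, MulOpposite.unop_injective hy⟩
  obtain ⟨e, he⟩ := exists_mul_left_eq_self_of_finite hop (hs.image MulOpposite.op)
  exact ⟨e.unop, fun x hx => MulOpposite.op_injective (he _ ⟨x, hx, rfl⟩)⟩

lemma add_sub_mul_mul_eq_self_and_mul_eq_self {e f x : R} (he : e * x = x) (hf : x * f = x) :
    (e + f - f * e) * x = x ∧ x * (e + f - f * e) = x := by
  refine ⟨(add_sub_mul_mul_eq_self_iff e f x).mpr (by simp [he]), ?_⟩
  calc x * (e + f - f * e) = x * e + x * f - x * f * e := by noncomm_ring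
    _ = x := by rw [hf]; abel

end

/-- A ring `R` is s-unital (`x ∈ xR ∩ Rx` for every `x`) iff for every finite family
`s_1, …, s_n` of elements of `R` there is a common local unit `f`. -/
theorem stmt5 {R : Type*} [NonUnitalRing R] :
    (∀ x : R, (∃ y : R, x = x * y) ∧ (∃ y : R, x = y * x)) ↔
    (∀ n : ℕ, 0 < n → ∀ s : Fin n → R,
      ∃ f : R, ∀ i : Fin n, f * s i = s i ∧ s i * f = s i) := by
  constructor
  · intro h n _ s
    obtain ⟨e, he⟩ := exists_mul_left_eq_self_of_finite (fun x => (h x).2) (Set.finite_range s)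
    obtain ⟨f, hf⟩ := exists_mul_right_eq_self_of_finite (fun x => (h x).1) (Set.finite_range s)
    exact ⟨e + f - f * e, fun i =>
      add_sub_mul_mul_eq_self_and_mul_eq_self (he _ ⟨i, rfl⟩) (hf _ ⟨i, rfl⟩)⟩
  · intro h x
    obtain ⟨f, hf⟩ := h 1 one_pos (fun _ => x)
    obtain ⟨hfx, hxf⟩ := hf 0
    exact ⟨⟨f, hxf.symm⟩, ⟨f, hfx.symm⟩⟩
end

section
/- If S is an epsilon-strongly G-graded ring, then S is unital with multiplicative identity element ε_e, and S_e is a unital subring of S. -/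
/-- The additive subgroup generated by all products `u * v` with `u ∈ U`, `v ∈ V`. -/
def mulSub {S : Type*} [NonUnitalRing S] (U V : AddSubgroup S) : AddSubgroup S :=
  AddSubgroup.closure (Set.image2 (· * ·) (U : Set S) (V : Set S))

/-- `comp` is a `G`-grading of the ring `S`: the components form an internal direct sum
and `S_g S_h ⊆ S_{gh}`. -/
def IsGrading {G : Type*} [Group G] [DecidableEq G] {S : Type*} [NonUnitalRing S]
    (comp : G → AddSubgroup S) : Prop :=
  DirectSum.IsInternal comp ∧
    ∀ g h : G, ∀ a ∈ comp g, ∀ b ∈ comp h, a * b ∈ comp (g * h)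

/-- The grading `comp` is epsilon-strong: for every `g` there are `ε_g ∈ S_g S_{g⁻¹}` and
`ε'_g ∈ S_{g⁻¹} S_g` with `ε_g s = s = s ε'_g` for all `s ∈ S_g`. -/
def EpsilonStrong {G : Type*} [Group G] {S : Type*} [NonUnitalRing S]
    (comp : G → AddSubgroup S) : Prop :=
  ∀ g : G, ∃ ε ∈ mulSub (comp g) (comp g⁻¹), ∃ ε' ∈ mulSub (comp g⁻¹) (comp g),
    ∀ s ∈ comp g, ε * s = s ∧ s * ε' = s

/-- The component `S_C = ⊕_{g ∈ C} S_g` of the induced `G/N`-grading. -/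
def indComp {G : Type*} [Group G] {S : Type*} [NonUnitalRing S]
    (comp : G → AddSubgroup S) (N : Subgroup G) (C : G ⧸ N) : AddSubgroup S :=
  ⨆ g : {g : G // (g : G ⧸ N) = C}, comp g.1

/-
For `g = e` the defining property gives `ε_e, ε'_e ∈ S_e S_e ⊆ S_e` acting as a left, resp. right,
identity on `S_e`. Since `ε_g ∈ S_e` and `ε_g s = s` for `s ∈ S_g`, we get
`ε_e s = ε_e (ε_g s) = (ε_e ε_g) s = ε_g s = s`, and symmetrically `s ε'_e = s`; by additivity
these identities extend from the homogeneous components to all of `S`. Then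
`ε_e = ε_e ε'_e = ε'_e` is a two-sided identity.
-/

theorem DirectSum.IsInternal.addMonoidHom_ext {ι M N : Type*} [DecidableEq ι] [AddCommGroup M]
    [AddMonoid N] {A : ι → AddSubgroup M} (hA : DirectSum.IsInternal A) {f g : M →+ N}
    (hfg : ∀ i, ∀ x ∈ A i, f x = g x) : f = g := by
  have hcomp : f.comp (DirectSum.coeAddMonoidHom A) = g.comp (DirectSum.coeAddMonoidHom A) :=
    DirectSum.addHom_ext fun i x => by simpa using hfg i x x.2
  ext x
  obtain ⟨d, rfl⟩ := hA.2 x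
  exact DFunLike.congr_fun hcomp d

namespace IsGrading

variable {G : Type*} [Group G] [DecidableEq G] {S : Type*} [NonUnitalRing S]
  {comp : G → AddSubgroup S}

theorem mulSub_le (hgr : IsGrading comp) (g h : G) :
    mulSub (comp g) (comp h) ≤ comp (g * h) :=
  (AddSubgroup.closure_le _).mpr <| by
    rintro x ⟨a, ha, b, hb, rfl⟩
    exact hgr.2 g h a ha b hb

theorem mulSub_mul_inv_le_one (hgr : IsGrading comp) (g : G) :
    mulSub (comp g) (comp g⁻¹) ≤ comp 1 := by
  simpa using hgr.mulSub_le g g⁻¹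

theorem mulSub_inv_mul_le_one (hgr : IsGrading comp) (g : G) :
    mulSub (comp g⁻¹) (comp g) ≤ comp 1 := by
  simpa using hgr.mulSub_le g⁻¹ g

theorem mul_left_eq_self_of_forall_mem_one (hgr : IsGrading comp) (hes : EpsilonStrong comp)
    {e : S} (he : ∀ s ∈ comp 1, e * s = s) (x : S) : e * x = x := by
  suffices AddMonoidHom.mulLeft e = AddMonoidHom.id S from DFunLike.congr_fun this x
  refine hgr.1.addMonoidHom_ext fun g s hs => ?_
  obtain ⟨ε, hε, ε', -, hunit⟩ := hes g
  calc e * s = e * (ε * s) := by rw [(hunit s hs).1]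
    _ = (e * ε) * s := (mul_assoc ..).symm
    _ = s := by rw [he ε (hgr.mulSub_mul_inv_le_one g hε), (hunit s hs).1]

theorem mul_right_eq_self_of_forall_mem_one (hgr : IsGrading comp) (hes : EpsilonStrong comp)
    {e : S} (he : ∀ s ∈ comp 1, s * e = s) (x : S) : x * e = x := by
  suffices AddMonoidHom.mulRight e = AddMonoidHom.id S from DFunLike.congr_fun this x
  refine hgr.1.addMonoidHom_ext fun g s hs => ?_
  obtain ⟨ε, -, ε', hε', hunit⟩ := hes g
  calc s * e = (s * ε') * e := by rw [(hunit s hs).2]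
    _ = s * (ε' * e) := mul_assoc ..
    _ = s := by rw [he ε' (hgr.mulSub_inv_mul_le_one g hε'), (hunit s hs).2]

end IsGrading

/-- If `S` is epsilon-strongly `G`-graded, then `S` is unital with multiplicative identity
`ε_e ∈ S_e S_e ⊆ S_e`; in particular `S_e` is a unital subring of `S`. -/
theorem stmt6 {G : Type*} [Group G] [DecidableEq G] {S : Type*} [NonUnitalRing S]
    (comp : G → AddSubgroup S) (hgr : IsGrading comp) (hes : EpsilonStrong comp) :
    ∃ one : S, one ∈ mulSub (comp (1 : G)) (comp (1 : G)) ∧ one ∈ comp (1 : G) ∧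
      ∀ x : S, one * x = x ∧ x * one = x := by
  obtain ⟨ε, hε, ε', -, hunit⟩ := hes 1
  rw [inv_one] at hε
  have hleft := hgr.mul_left_eq_self_of_forall_mem_one hes fun s hs => (hunit s hs).1
  have hright := hgr.mul_right_eq_self_of_forall_mem_one hes fun s hs => (hunit s hs).2
  have hεε' : ε = ε' := by rw [← hleft ε', hright ε]
  exact ⟨ε, hε, by simpa using hgr.mulSub_le 1 1 hε, fun x => ⟨hleft x, hεε' ▸ hright x⟩⟩
end

section
/- Let φ: A → B be a surjective G-graded ring homomorphism of G-graded rings. If A is epsilon-strongly G-graded, then B is epsilon-strongly G-graded. -/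
theorem map_mem_mulSub {A B : Type*} [NonUnitalRing A] [NonUnitalRing B]
    (φ : A →ₙ+* B) {U V : AddSubgroup A} {U' V' : AddSubgroup B}
    (hU : ∀ a ∈ U, φ a ∈ U') (hV : ∀ a ∈ V, φ a ∈ V')
    {x : A} (hx : x ∈ mulSub U V) : φ x ∈ mulSub U' V' := by
  induction hx using AddSubgroup.closure_induction with
  | mem y hy =>
    obtain ⟨u, hu, v, hv, rfl⟩ := hy
    exact AddSubgroup.subset_closure ⟨φ u, hU u hu, φ v, hV v hv, (map_mul φ u v).symm⟩
  | zero => simpa only [map_zero] using zero_mem _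
  | add a b _ _ ha hb => simpa only [map_add] using add_mem ha hb
  | neg a _ ha => simpa only [map_neg] using neg_mem ha

/- Modulo `⨆ j ≠ g, B_j`, every `φ a` agrees with the image of an element of `A_g`; when `φ a`
lies in `B_g`, independence of the `B_j` makes that difference vanish. -/
theorem exists_mem_map_eq_of_map_mem {ι A B : Type*} [DecidableEq ι]
    [AddCommGroup A] [AddCommGroup B] {compA : ι → AddSubgroup A} {compB : ι → AddSubgroup B}
    (hA : DirectSum.IsInternal compA) (hB : iSupIndep compB)
    (φ : A →+ B) (hφ : ∀ i, ∀ a ∈ compA i, φ a ∈ compB i)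
    {g : ι} {a : A} (ha : φ a ∈ compB g) : ∃ a' ∈ compA g, φ a' = φ a := by
  have approx : ∀ a : A, ∃ a' ∈ compA g, φ a - φ a' ∈ ⨆ (j) (_ : j ≠ g), compB j := by
    intro a
    obtain ⟨x, rfl⟩ := hA.surjective a
    induction x using DirectSum.induction_on with
    | zero => exact ⟨0, zero_mem _, by simp [zero_mem]⟩
    | of i y =>
      rw [DirectSum.coeAddMonoidHom_of]
      by_cases hi : i = g
      · subst hi
        exact ⟨y, y.2, by simp [zero_mem]⟩
      · refine ⟨0, zero_mem _, ?_⟩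
        rw [map_zero, sub_zero]
        exact AddSubgroup.mem_iSup_of_mem i (AddSubgroup.mem_iSup_of_mem hi (hφ i y y.2))
    | add x y hx hy =>
      obtain ⟨a₁, ha₁, h₁⟩ := hx
      obtain ⟨a₂, ha₂, h₂⟩ := hy
      refine ⟨a₁ + a₂, add_mem ha₁ ha₂, ?_⟩
      rw [map_add, map_add, map_add, add_sub_add_comm]
      exact add_mem h₁ h₂
  obtain ⟨a', ha', hdiff⟩ := approx a
  have hmem : φ a - φ a' ∈ compB g := sub_mem ha (hφ g a' ha')
  have hzero := (iSupIndep_def.mp hB g).le_bot ⟨hmem, hdiff⟩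
  exact ⟨a', ha', (sub_eq_zero.mp hzero).symm⟩

/-- If `φ : A → B` is a surjective `G`-graded ring homomorphism and `A` is epsilon-strongly
`G`-graded, then `B` is epsilon-strongly `G`-graded. -/
theorem stmt8 {G : Type*} [Group G] [DecidableEq G]
    {A B : Type*} [NonUnitalRing A] [NonUnitalRing B]
    (compA : G → AddSubgroup A) (compB : G → AddSubgroup B)
    (hA : IsGrading compA) (hB : IsGrading compB)
    (φ : A →ₙ+* B) (hsurj : Function.Surjective φ)
    (hgraded : ∀ g : G, ∀ a ∈ compA g, φ a ∈ compB g)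
    (hes : EpsilonStrong compA) :
    EpsilonStrong compB := by
  intro g
  obtain ⟨ε, hε, ε', hε', hunit⟩ := hes g
  refine ⟨φ ε, map_mem_mulSub φ (hgraded g) (hgraded g⁻¹) hε,
    φ ε', map_mem_mulSub φ (hgraded g⁻¹) (hgraded g) hε', fun s hs => ?_⟩
  obtain ⟨a, rfl⟩ := hsurj s
  obtain ⟨a', ha', hlift⟩ := exists_mem_map_eq_of_map_mem hA.1 hB.1.addSubgroup_iSupIndep
    (φ : A →+ B) hgraded hs
  rw [← show φ a' = φ a from hlift]
  obtain ⟨hleft, hright⟩ := hunit a' ha'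
  exact ⟨by rw [← map_mul, hleft], by rw [← map_mul, hright]⟩
end

section
/- Let N be a normal subgroup of G and S a nearly epsilon-strongly G-graded ring. Then the induced G/N-grading of S is nearly epsilon-strong: for every coset C ∈ G/N and every s ∈ S_C, there exist e ∈ S_C S_{C^{-1}} and e' ∈ S_{C^{-1}} S_C such that e·s = s = s·e'. -/
/-!
Write `S_C` as the sum of the components `S_g`, `g ∈ C`. A homogeneous `x ∈ S_g` has a local
unit in `S_g S_{g⁻¹} ⊆ S_C S_{C⁻¹} ∩ S_1`, and local units for the summands are merged one at a
time: if `e` fixes some elements from the left and `f` is a left unit for `x - e x`, then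
`e + f - f e` fixes those elements and `x` as well, because `1 - (e + f - f e) = (1 - f)(1 - e)`.
For this the units must lie in `S_1`, so that `x - e x` stays in `S_g`. Right units are
obtained the same way in the opposite ring.
-/

section MulSub

variable {S : Type*} [NonUnitalRing S] {U V : AddSubgroup S}

theorem mem_mulSub {u v : S}
    (hu : u ∈ U) (hv : v ∈ V) : u * v ∈ mulSub U V :=
  AddSubgroup.subset_closure ⟨u, hu, v, hv, rfl⟩

theorem mulSub_le {W : AddSubgroup S}
    (h : ∀ u ∈ U, ∀ v ∈ V, u * v ∈ W) : mulSub U V ≤ W := by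
  rw [mulSub, AddSubgroup.closure_le]
  rintro _ ⟨u, hu, v, hv, rfl⟩
  exact h u hu v hv

theorem mulSub_mono {U' V' : AddSubgroup S}
    (hU : U ≤ U') (hV : V ≤ V') : mulSub U V ≤ mulSub U' V' :=
  mulSub_le fun _ hu _ hv => mem_mulSub (hU hu) (hV hv)

theorem mulSub_mul_mem {c x : S}
    (hc : ∀ v ∈ V, v * c ∈ V) (hx : x ∈ mulSub U V) : x * c ∈ mulSub U V := by
  induction hx using AddSubgroup.closure_induction with
  | mem y hy =>
    obtain ⟨u, hu, v, hv, rfl⟩ := hy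
    rw [mul_assoc]
    exact mem_mulSub hu (hc v hv)
  | zero => simp
  | add a b _ _ ha hb => rw [add_mul]; exact add_mem ha hb
  | neg a _ ha => rw [neg_mul]; exact neg_mem ha

theorem mul_mulSub_mem {c x : S}
    (hc : ∀ u ∈ U, c * u ∈ U) (hx : x ∈ mulSub U V) : c * x ∈ mulSub U V := by
  induction hx using AddSubgroup.closure_induction with
  | mem y hy =>
    obtain ⟨u, hu, v, hv, rfl⟩ := hy
    rw [← mul_assoc]
    exact mem_mulSub (hc u hu) hv
  | zero => simp
  | add a b _ _ ha hb => rw [mul_add]; exact add_mem ha hb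
  | neg a _ ha => rw [mul_neg]; exact neg_mem ha

end MulSub

section LocalUnits

variable {S ι : Type*} [NonUnitalRing S] {E : Set S} {M : ι → AddSubgroup S}

theorem exists_left_unit_of_mem_iSup (hE₀ : (0 : S) ∈ E)
    (hE : ∀ e ∈ E, ∀ f ∈ E, e + f - f * e ∈ E) (hEM : ∀ e ∈ E, ∀ i, ∀ x ∈ M i, e * x ∈ M i)
    (hM : ∀ i, ∀ x ∈ M i, ∃ f ∈ E, f * x = x) {s : S} (hs : s ∈ ⨆ i, M i) :
    ∃ e ∈ E, e * s = s := by
  suffices ∀ e₀ ∈ E, ∃ e ∈ E, e * s = s ∧ ∀ t, e₀ * t = t → e * t = t by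
    obtain ⟨e, he, hes, -⟩ := this 0 hE₀
    exact ⟨e, he, hes⟩
  induction hs using AddSubgroup.iSup_induction' with
  | hp i x hx =>
    intro e₀ he₀
    obtain ⟨f, hf, hfx⟩ := hM i _ (sub_mem hx (hEM e₀ he₀ i x hx))
    have merge : ∀ t, (e₀ + f - f * e₀) * t = e₀ * t + f * (t - e₀ * t) := fun t => by
      noncomm_ring
    refine ⟨e₀ + f - f * e₀, hE e₀ he₀ f hf, ?_, fun t ht => ?_⟩
    · rw [merge, hfx, add_sub_cancel]
    · rw [merge, ht, sub_self, mul_zero, add_zero]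
  | h1 => exact fun e₀ he₀ => ⟨e₀, he₀, mul_zero e₀, fun _ => id⟩
  | hadd x y _ _ hx hy =>
    intro e₀ he₀
    obtain ⟨e₁, he₁, he₁x, h₀₁⟩ := hx e₀ he₀
    obtain ⟨e₂, he₂, he₂y, h₁₂⟩ := hy e₁ he₁
    exact ⟨e₂, he₂, by rw [mul_add, h₁₂ x he₁x, he₂y], fun t ht => h₁₂ t (h₀₁ t ht)⟩

theorem exists_right_unit_of_mem_iSup (hE₀ : (0 : S) ∈ E)
    (hE : ∀ e ∈ E, ∀ f ∈ E, e + f - e * f ∈ E) (hEM : ∀ e ∈ E, ∀ i, ∀ x ∈ M i, x * e ∈ M i)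
    (hM : ∀ i, ∀ x ∈ M i, ∃ f ∈ E, x * f = x) {s : S} (hs : s ∈ ⨆ i, M i) :
    ∃ e ∈ E, s * e = s := by
  let opM : ι → AddSubgroup Sᵐᵒᵖ := fun i => (M i).map MulOpposite.opAddEquiv.toAddMonoidHom
  have mem_opM : ∀ i x, x ∈ opM i ↔ x.unop ∈ M i := fun _ _ => AddSubgroup.mem_map_equiv
  have hs' : MulOpposite.op s ∈ ⨆ i, opM i := by
    rw [← AddSubgroup.map_iSup]
    exact AddSubgroup.mem_map_of_mem _ hs
  obtain ⟨e, he, hes⟩ := exists_left_unit_of_mem_iSup (E := MulOpposite.unop ⁻¹' E) hE₀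
    (fun e he f hf => hE _ he _ hf)
    (fun e he i x hx => (mem_opM i _).2 (hEM _ he i _ ((mem_opM i x).1 hx)))
    (fun i x hx => let ⟨f, hf, hxf⟩ := hM i _ ((mem_opM i x).1 hx)
      ⟨MulOpposite.op f, hf, congrArg MulOpposite.op hxf⟩) hs'
  exact ⟨e.unop, he, congrArg MulOpposite.unop hes⟩

end LocalUnits

section InducedGrading

variable {G S : Type*} [Group G] [NonUnitalRing S] {comp : G → AddSubgroup S}
  (hmul : ∀ g h : G, ∀ a ∈ comp g, ∀ b ∈ comp h, a * b ∈ comp (g * h))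

theorem comp_le_indComp (N : Subgroup G) (g : G) : comp g ≤ indComp comp N g :=
  le_iSup (fun g' : {g' : G // (g' : G ⧸ N) = g} => comp g'.1) ⟨g, rfl⟩

include hmul

theorem mulSub_comp_le (g h : G) : mulSub (comp g) (comp h) ≤ comp (g * h) :=
  mulSub_le (hmul g h)

variable (N : Subgroup G) [N.Normal]

theorem mul_mem_indComp_of_right_mem_comp {C : G ⧸ N} {h : G} {x y : S}
    (hx : x ∈ indComp comp N C) (hy : y ∈ comp h) : x * y ∈ indComp comp N (C * h) := by
  induction hx using AddSubgroup.iSup_induction' with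
  | hp g x hx =>
    obtain ⟨g, rfl⟩ := g
    exact comp_le_indComp N (g * h) (hmul g h x hx y hy)
  | h1 => simp
  | hadd a b _ _ ha hb => rw [add_mul]; exact add_mem ha hb

theorem mul_mem_indComp_of_left_mem_comp {C : G ⧸ N} {h : G} {x y : S}
    (hy : y ∈ comp h) (hx : x ∈ indComp comp N C) : y * x ∈ indComp comp N (h * C) := by
  induction hx using AddSubgroup.iSup_induction' with
  | hp g x hx =>
    obtain ⟨g, rfl⟩ := g
    exact comp_le_indComp N (h * g) (hmul h g y hy x hx)
  | h1 => simp
  | hadd a b _ _ ha hb => rw [mul_add]; exact add_mem ha hb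

theorem exists_left_unit_of_mem_indComp
    (hunit : ∀ g : G, ∀ s ∈ comp g, ∃ e ∈ mulSub (comp g) (comp g⁻¹), e * s = s)
    {C : G ⧸ N} {s : S} (hs : s ∈ indComp comp N C) :
    ∃ e ∈ mulSub (indComp comp N C) (indComp comp N C⁻¹), e * s = s := by
  refine (exists_left_unit_of_mem_iSup
    (E := (mulSub (indComp comp N C) (indComp comp N C⁻¹) : Set S) ∩ comp 1)
    (M := fun g : {g : G // (g : G ⧸ N) = C} => comp g.1)
    ⟨zero_mem _, zero_mem _⟩ ?_ ?_ ?_ hs).imp fun _ ⟨⟨he, _⟩, hes⟩ => ⟨he, hes⟩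
  · rintro e ⟨heA, he₁⟩ f ⟨hfA, hf₁⟩
    have hfeA : f * e ∈ mulSub (indComp comp N C) (indComp comp N C⁻¹) :=
      mulSub_mul_mem (fun v hv => by
        simpa using mul_mem_indComp_of_right_mem_comp hmul N hv he₁) hfA
    have hfe₁ : f * e ∈ comp 1 := by simpa using hmul 1 1 f hf₁ e he₁
    exact ⟨sub_mem (add_mem heA hfA) hfeA, sub_mem (add_mem he₁ hf₁) hfe₁⟩
  · rintro e ⟨-, he₁⟩ g x hx
    simpa using hmul 1 g e he₁ x hx
  · rintro ⟨g, rfl⟩ x hx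
    obtain ⟨f, hf, hfx⟩ := hunit g x hx
    exact ⟨f, ⟨mulSub_mono (comp_le_indComp N g) (comp_le_indComp N g⁻¹) hf,
      by simpa using mulSub_comp_le hmul g g⁻¹ hf⟩, hfx⟩

theorem exists_right_unit_of_mem_indComp
    (hunit : ∀ g : G, ∀ s ∈ comp g, ∃ e ∈ mulSub (comp g⁻¹) (comp g), s * e = s)
    {C : G ⧸ N} {s : S} (hs : s ∈ indComp comp N C) :
    ∃ e ∈ mulSub (indComp comp N C⁻¹) (indComp comp N C), s * e = s := by
  refine (exists_right_unit_of_mem_iSup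
    (E := (mulSub (indComp comp N C⁻¹) (indComp comp N C) : Set S) ∩ comp 1)
    (M := fun g : {g : G // (g : G ⧸ N) = C} => comp g.1)
    ⟨zero_mem _, zero_mem _⟩ ?_ ?_ ?_ hs).imp fun _ ⟨⟨he, _⟩, hes⟩ => ⟨he, hes⟩
  · rintro e ⟨heA, he₁⟩ f ⟨hfA, hf₁⟩
    have hefA : e * f ∈ mulSub (indComp comp N C⁻¹) (indComp comp N C) :=
      mul_mulSub_mem (fun u hu => by
        simpa using mul_mem_indComp_of_left_mem_comp hmul N he₁ hu) hfA
    have hef₁ : e * f ∈ comp 1 := by simpa using hmul 1 1 e he₁ f hf₁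
    exact ⟨sub_mem (add_mem heA hfA) hefA, sub_mem (add_mem he₁ hf₁) hef₁⟩
  · rintro e ⟨-, he₁⟩ g x hx
    simpa using hmul g 1 x hx e he₁
  · rintro ⟨g, rfl⟩ x hx
    obtain ⟨f, hf, hxf⟩ := hunit g x hx
    exact ⟨f, ⟨mulSub_mono (comp_le_indComp N g⁻¹) (comp_le_indComp N g) hf,
      by simpa using mulSub_comp_le hmul g⁻¹ g hf⟩, hxf⟩

end InducedGrading

/-- If `S` is nearly epsilon-strongly `G`-graded and `N ◃ G`, then the induced `G/N`-grading
is nearly epsilon-strong. -/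
theorem stmt11 {G : Type*} [Group G] [DecidableEq G] {S : Type*} [NonUnitalRing S]
    (comp : G → AddSubgroup S) (hgr : IsGrading comp)
    (hnes : ∀ g : G, ∀ s ∈ comp g, ∃ e ∈ mulSub (comp g) (comp g⁻¹),
      ∃ e' ∈ mulSub (comp g⁻¹) (comp g), e * s = s ∧ s * e' = s)
    (N : Subgroup G) [N.Normal] :
    ∀ C : G ⧸ N, ∀ s ∈ indComp comp N C,
      ∃ e ∈ mulSub (indComp comp N C) (indComp comp N C⁻¹),
        ∃ e' ∈ mulSub (indComp comp N C⁻¹) (indComp comp N C),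
          e * s = s ∧ s * e' = s := by
  intro C s hs
  obtain ⟨e, he, hes⟩ := exists_left_unit_of_mem_indComp hgr.2 N
    (fun g x hx => let ⟨e, he, _, _, hex, _⟩ := hnes g x hx; ⟨e, he, hex⟩) hs
  obtain ⟨e', he', hse'⟩ := exists_right_unit_of_mem_indComp hgr.2 N
    (fun g x hx => let ⟨_, _, e', he', _, hxe'⟩ := hnes g x hx; ⟨e', he', hxe'⟩) hs
  exact ⟨e, he, e', he', hes, hse'⟩
end

section
/- Consider the partial action of Z on R = ∏_Z Q given by D_0 = R, D_i = e_i R for i ≠ 0 (e_i the Kronecker delta sequence), with α_i : D_{-i} → D_i defined by (α_i f)(i) = f(-i). The induced Z/2Z-grading of the partial skew group ring R ⋆_α Z, with components S_0 = ⊕_n D_{2n} δ_{2n} and S_1 = ⊕_n D_{2n+1} δ_{2n+1}, is not epsilon-strong: the ring S_1 S_1 has no multiplicative identity element. -/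
open scoped Classical

noncomputable section

/-- The base ring `R = ∏_ℤ ℚ`. -/
abbrev Rr : Type := ℤ → ℚ

/-- The underlying additive group of the partial skew group ring `R ⋆_α ℤ = ⊕_n D_n δ_n`,
realized as finitely supported functions `ℤ → R`. -/
abbrev Aa : Type := Π₀ _ : ℤ, Rr

/-- `1_g`, the identity of the ideal `D_g`: `D_0 = R` and `D_g = e_g R` for `g ≠ 0`,
where `e_g` is the Kronecker delta sequence. -/
def oneD (g : ℤ) : Rr := if g = 0 then (fun _ => 1) else (fun i => if i = g then 1 else 0)

/-- The partial action: `α_0 = id` and, for `g ≠ 0`, `α_g : D_{-g} → D_g` is given by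
`(α_g f)(g) = f (-g)` (and `0` elsewhere). -/
def alpha (g : ℤ) (f : Rr) : Rr :=
  if g = 0 then f else fun i => if i = g then f (-g) else 0

/-- The multiplication of the partial skew group ring:
`(a δ_g)(b δ_h) = a α_g(b 1_{-g}) δ_{g+h}`. -/
def mulA (x y : Aa) : Aa :=
  x.sum fun g a => y.sum fun h b => DFinsupp.single (g + h) (a * alpha g (b * oneD (-g)))

/-- The odd component `S_1 = ⊕_n D_{2n+1} δ_{2n+1}` of the induced `ℤ/2ℤ`-grading. -/
def S1 : AddSubgroup Aa :=
  AddSubgroup.closure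
    {x | ∃ (n : ℤ) (a : Rr), ¬ Even n ∧ (∀ j : ℤ, j ≠ n → a j = 0) ∧
      x = DFinsupp.single n a}

/-- The ring `S_1 S_1` (the additive group generated by products of elements of `S_1`). -/
def S1S1 : AddSubgroup Aa :=
  AddSubgroup.closure (Set.image2 mulA (S1 : Set Aa) (S1 : Set Aa))

/- The degree-`0` component of any element of `S₁ S₁` is a finitely supported sequence, since a
product `(a δ_n) y` with `a ∈ D_n = e_n R` has degree-`0` component in `e_n R`. But for every odd
`g`, the element `e_g δ_0 = (e_g δ_g)(e_{-g} δ_{-g})` lies in `S₁ S₁`, so an identity `u` of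
`S₁ S₁` would satisfy `e_g u_0 = e_g`, i.e. `u_0(g) = 1` for infinitely many `g`. -/

lemma alpha_zero : alpha 0 = id := funext fun _ => if_pos rfl

lemma oneD_zero : oneD 0 = 1 := if_pos rfl

lemma alpha_map_zero (g : ℤ) : alpha g 0 = 0 := by
  unfold alpha
  split_ifs
  · rfl
  · funext i; simp

lemma mulA_add_left (x x' y : Aa) : mulA (x + x') y = mulA x y + mulA x' y := by
  unfold mulA
  rw [DFinsupp.sum_add_index]
  · intro g; simp
  · intro g a a'
    rw [← DFinsupp.sum_add]
    congr 1; funext h b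
    rw [add_mul, DFinsupp.single_add]

def mulRight (y : Aa) : Aa →+ Aa where
  toFun x := mulA x y
  map_zero' := DFinsupp.sum_zero_index
  map_add' x x' := mulA_add_left x x' y

lemma mulA_single_apply (n : ℤ) (a : Rr) (y : Aa) (k : ℤ) :
    mulA (DFinsupp.single n a) y k = a * alpha n (y (k - n) * oneD (-n)) := by
  unfold mulA
  rw [DFinsupp.sum_single_index (by simp), DFinsupp.sum_apply, DFinsupp.sum,
    Finset.sum_eq_single (k - n)]
  · rw [add_sub_cancel, DFinsupp.single_eq_same]
  · intro h _ hne
    exact DFinsupp.single_eq_of_ne (by omega)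
  · intro hk
    rw [DFinsupp.notMem_support_iff.mp hk, zero_mul, alpha_map_zero, mul_zero,
      DFinsupp.single_zero, DFinsupp.zero_apply]

def finiteSupportAtZero : AddSubgroup Aa where
  carrier := {x | (x 0).support.Finite}
  zero_mem' := by simp
  add_mem' {x y} hx hy := (hx.union hy).subset (Function.support_add (x 0) (y 0))
  neg_mem' {x} hx := by simpa using hx

lemma S1_le_comap_mulRight (y : Aa) : S1 ≤ finiteSupportAtZero.comap (mulRight y) := by
  rw [S1, AddSubgroup.closure_le]
  rintro _ ⟨n, a, -, ha, rfl⟩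
  refine (Set.finite_singleton n).subset fun j hj => ?_
  by_contra hjn
  apply hj
  change mulA (DFinsupp.single n a) y 0 j = 0
  rw [mulA_single_apply, Pi.mul_apply, ha j hjn, zero_mul]

lemma S1S1_le_finiteSupportAtZero : S1S1 ≤ finiteSupportAtZero := by
  rw [S1S1, AddSubgroup.closure_le]
  rintro _ ⟨x, hx, y, -, rfl⟩
  exact S1_le_comap_mulRight y hx

lemma single_piSingle_mem_S1 {g : ℤ} (hg : ¬ Even g) :
    (DFinsupp.single g (Pi.single g 1) : Aa) ∈ S1 :=
  AddSubgroup.subset_closure ⟨g, _, hg, fun _ hj => Pi.single_eq_of_ne hj _, rfl⟩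

lemma single_zero_piSingle_mem_S1S1 {g : ℤ} (hg : ¬ Even g) :
    (DFinsupp.single 0 (Pi.single g 1) : Aa) ∈ S1S1 := by
  have hg0 : g ≠ 0 := by rintro rfl; exact hg Even.zero
  have hprod : mulA (DFinsupp.single g (Pi.single g 1)) (DFinsupp.single (-g) (Pi.single (-g) 1))
      = DFinsupp.single 0 (Pi.single g 1) := by
    ext k i
    rw [mulA_single_apply]
    rcases eq_or_ne k 0 with rfl | hk
    · by_cases hi : i = g <;> simp [alpha, oneD, hg0, hi]
    · have hk' : -g ≠ k - g := by omega
      simp [Pi.single_apply, alpha, hg0, hk', Ne.symm hk]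
  rw [← hprod]
  exact AddSubgroup.subset_closure
    ⟨_, single_piSingle_mem_S1 hg, _, single_piSingle_mem_S1 (by simpa using hg), rfl⟩

lemma setOf_not_even_infinite : {g : ℤ | ¬ Even g}.Infinite := by
  refine Set.infinite_of_not_bddAbove fun ⟨M, hM⟩ => ?_
  have : 2 * |M| + 1 ≤ M := hM (by simp [parity_simps] : ¬ Even (2 * |M| + 1))
  linarith [le_abs_self M, abs_nonneg M]

/-- The induced `ℤ/2ℤ`-grading of `R ⋆_α ℤ` is not epsilon-strong: the ring `S_1 S_1` has
no multiplicative identity element. -/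
theorem stmt18 :
    ¬ ∃ one ∈ S1S1, ∀ z ∈ S1S1, mulA one z = z ∧ mulA z one = z := by
  rintro ⟨u, hu, hunit⟩
  have hu_odd : ∀ g : ℤ, ¬ Even g → u 0 g = 1 := fun g hg => by
    have h := congr_arg (fun x : Aa => x 0 g) (hunit _ (single_zero_piSingle_mem_S1S1 hg)).2
    simpa [mulA_single_apply, alpha_zero, oneD_zero] using h
  exact setOf_not_even_infinite.mono (fun g hg => by simp [hu_odd g hg])
    (S1S1_le_finiteSupportAtZero hu)

end
end
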